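/- Let α ∈ (0,1), m ≥ 1, 0 ≤ r ≤ m, and define K(m,r,α) = { k ∈ {1,…,m} : Σ_{i=0}^k C(m−r, k−i) C(r, i) (−α/(1−α))^i = 0 }. Suppose f : [0,1]^m → ℂ has the form f(x_1,…,x_m) = Σ_{k ∈ K(m,r,α)} Σ_{S ⊆ [m], |S|=k} g_k(x_S), where each g_k : [0,1]^k → ℂ is an integrable symmetric function with ∫_0^1 g_k(x_1,…,x_k) dx_i = 0 for every i ∈ [k]. Then ∫_{A^{m−r} × (A^c)^r} f = 0 for every measurable A ⊆ [0,1] with λ(A) = α. -/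

import Mathlib

open MeasureTheory

/-- The unit cube `[0,1]^k` as a subset of `Fin k → ℝ`. -/
def unitCube (k : ℕ) : Set (Fin k → ℝ) := Set.univ.pi fun _ => Set.Icc (0 : ℝ) 1

open Classical in
/-- `K(m,r,α) = { k ∈ [m] : Σ_{i=0}^k C(m−r,k−i) C(r,i) (−α/(1−α))^i = 0 }`. -/
noncomputable def Kset (m r : ℕ) (α : ℝ) : Finset ℕ :=
  (Finset.Icc 1 m).filter fun k =>
    ∑ i ∈ Finset.range (k + 1),
      ((m - r).choose (k - i) : ℝ) * (r.choose i : ℝ) * (-α / (1 - α)) ^ i = 0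

/-!
On `[0,1]` write `1_A = α + H` and `1_{Aᶜ} = (1 - α) - H`, where `H = 1_A - α` has mean zero.
Expanding the indicator `∏ i, 1_{B i} (x i)` of the box over subsets `T` of coordinates, the
integral of the `T`-term against `g_{|S|} (x_S)` vanishes unless `T = S`: a coordinate of `T \ S`
integrates `H` to zero and a coordinate of `S \ T` integrates `g` to zero. Hence the integral of
`g_{|S|} (x_S)` over the box is `w(S) I_{|S|}` with `I_k = ∫ ∏ j, H (y j) * g_k y`, and the
weights `w(S)` of the `k`-subsets add up to the `k`-th coefficient of
`(α + X) ^ (m - r) * (1 - α - X) ^ r`, a nonzero multiple of the sum that vanishes for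
`k ∈ K(m, r, α)`.
-/

open Finset Function

section Combinatorics

open Polynomial

theorem coeff_C_mul_X_add_C_pow {R : Type*} [CommSemiring R] (a b : R) (n k : ℕ) :
    ((C a * X + C b) ^ n).coeff k = n.choose k * a ^ k * b ^ (n - k) := by
  rw [add_pow, finsetSum_coeff]
  simp only [mul_pow, ← C_pow, ← C_eq_natCast, mul_right_comm _ (X ^ _), mul_assoc, ← map_mul,
    coeff_C_mul_X_pow]
  rw [sum_ite_eq]
  split_ifs with hk
  · ring
  · rw [Nat.choose_eq_zero_of_lt (by simpa using hk)]
    simp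

theorem coeff_prod_C_mul_X_add_C {ι R : Type*} [CommSemiring R] [DecidableEq ι] (s : Finset ι)
    (a b : ι → R) (k : ℕ) :
    (∏ i ∈ s, (C (a i) * X + C (b i))).coeff k =
      ∑ T ∈ s.powersetCard k, (∏ i ∈ T, a i) * ∏ i ∈ s \ T, b i := by
  rw [prod_add, finsetSum_coeff, powersetCard_eq_filter, sum_filter]
  refine sum_congr rfl fun T _ => ?_
  rw [prod_mul_distrib, prod_const, ← map_prod, ← map_prod, mul_right_comm, ← map_mul,
    coeff_C_mul_X_pow]
  simp only [eq_comm]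

theorem sum_powersetCard_prod_ite {R : Type*} [CommSemiring R] {m p : ℕ} (hp : p ≤ m)
    (a₁ b₁ a₂ b₂ : R) (k : ℕ) :
    ∑ T ∈ (univ : Finset (Fin m)).powersetCard k,
        ((∏ i ∈ T, if (i : ℕ) < p then a₁ else a₂) *
          ∏ i ∈ univ \ T, if (i : ℕ) < p then b₁ else b₂) =
      ∑ i ∈ range (k + 1), (p.choose (k - i) * a₁ ^ (k - i) * b₁ ^ (p - (k - i))) *
        ((m - p).choose i * a₂ ^ i * b₂ ^ (m - p - i)) := by
  have hsplit : ∏ i : Fin m,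
      (C (if (i : ℕ) < p then a₁ else a₂) * X + C (if (i : ℕ) < p then b₁ else b₂)) =
        (C a₂ * X + C b₂) ^ (m - p) * (C a₁ * X + C b₁) ^ p := by
    have hcard : #{i : Fin m | (i : ℕ) < p} = p := by simp [Fin.card_filter_val_lt, hp]
    have hcard' : #{i : Fin m | ¬ (i : ℕ) < p} = m - p := by
      rw [filter_not, card_sdiff_of_subset (filter_subset _ _), hcard, card_univ, Fintype.card_fin]
    have hfactor : ∀ i : Fin m, C (if (i : ℕ) < p then a₁ else a₂) * X
        + C (if (i : ℕ) < p then b₁ else b₂)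
        = if (i : ℕ) < p then C a₁ * X + C b₁ else C a₂ * X + C b₂ := fun i => by
      split_ifs <;> rfl
    rw [prod_congr rfl fun i _ => hfactor i, prod_ite, prod_const, prod_const, hcard, hcard',
      mul_comm]
  rw [← coeff_prod_C_mul_X_add_C, hsplit, coeff_mul, Nat.sum_antidiagonal_eq_sum_range_succ_mk]
  simp only [coeff_C_mul_X_add_C_pow]
  exact sum_congr rfl fun i _ => mul_comm _ _

end Combinatorics

/-- Dividing the `i`-th term by `α ^ p * (1 - α) ^ q / α ^ k` turns it into
`C(p, k - i) C(q, i) (-α / (1 - α)) ^ i`. -/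
theorem sum_choose_mul_pow_eq_zero {p q k : ℕ} {α : ℝ} (h0 : α ≠ 0) (h1 : α ≠ 1)
    (hK : ∑ i ∈ range (k + 1), (p.choose (k - i) : ℝ) * q.choose i * (-α / (1 - α)) ^ i = 0) :
    ∑ i ∈ range (k + 1), (p.choose (k - i) * α ^ (p - (k - i))) *
        (q.choose i * (-1) ^ i * (1 - α) ^ (q - i)) = 0 := by
  have h1' : 1 - α ≠ 0 := sub_ne_zero.2 h1.symm
  suffices hterm : ∀ i ∈ range (k + 1), (p.choose (k - i) * α ^ (p - (k - i))) *
      (q.choose i * (-1) ^ i * (1 - α) ^ (q - i)) =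
      α ^ p * (1 - α) ^ q / α ^ k * ((p.choose (k - i) : ℝ) * q.choose i * (-α / (1 - α)) ^ i) by
    rw [sum_congr rfl hterm, ← mul_sum, hK, mul_zero]
  intro i hi
  have hik : i ≤ k := Nat.lt_succ_iff.mp (mem_range.mp hi)
  rcases lt_or_ge p (k - i) with hp | hp
  · simp [Nat.choose_eq_zero_of_lt hp]
  rcases lt_or_ge q i with hq | hq
  · simp [Nat.choose_eq_zero_of_lt hq]
  obtain ⟨a, rfl⟩ := Nat.exists_eq_add_of_le hp
  obtain ⟨b, rfl⟩ := Nat.exists_eq_add_of_le hq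
  obtain ⟨j, rfl⟩ := Nat.exists_eq_add_of_le hik
  simp only [add_tsub_cancel_left]
  rw [div_pow, neg_pow]
  field_simp
  ring

/-- The constant that a set `S` of coordinates picks up when `1_A = α + H` is expanded on the
coordinates satisfying `p` and `1_{Aᶜ} = (1 - α) - H` on the others. -/
def layerWeight {ι : Type*} [Fintype ι] [DecidableEq ι] (p : ι → Prop) [DecidablePred p]
    (α : ℂ) (S : Finset ι) : ℂ :=
  (∏ i ∈ S, if p i then 1 else -1) * ∏ i ∈ univ \ S, if p i then α else 1 - α

theorem sum_powersetCard_layerWeight_eq_zero {m r : ℕ} (hr : r ≤ m) {α : ℝ}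
    (hα : α ∈ Set.Ioo (0 : ℝ) 1) {k : ℕ} (hk : k ∈ Kset m r α) :
    ∑ S ∈ (univ : Finset (Fin m)).powersetCard k,
      layerWeight (fun i : Fin m => (i : ℕ) < m - r) α S = 0 := by
  rw [Kset, mem_filter] at hk
  have hreal := sum_choose_mul_pow_eq_zero hα.1.ne' hα.2.ne hk.2
  unfold layerWeight
  rw [sum_powersetCard_prod_ite (Nat.sub_le m r), Nat.sub_sub_self hr]
  simpa using congrArg ((↑) : ℝ → ℂ) hreal

theorem sum_filter_card_mem_mul_eq_zero {ι R : Type*} [Fintype ι] [DecidableEq ι]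
    [NonUnitalNonAssocSemiring R] (K : Finset ℕ) (w : Finset ι → R) (I : ℕ → R)
    (hw : ∀ k ∈ K, ∑ S ∈ univ.powersetCard k, w S = 0) :
    ∑ S ∈ (univ : Finset (Finset ι)).filter (#· ∈ K), w S * I #S = 0 := by
  rw [← sum_fiberwise_of_maps_to (g := card) fun S hS => (mem_filter.1 hS).2]
  refine sum_eq_zero fun k hk => ?_
  have hfiber : ((univ : Finset (Finset ι)).filter (#· ∈ K)).filter (#· = k) =
      univ.powersetCard k := by
    ext S
    simp only [mem_filter, mem_univ, true_and, mem_powersetCard, subset_univ]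
    exact ⟨And.right, fun h => ⟨h ▸ hk, h⟩⟩
  rw [hfiber, sum_congr rfl fun S hS => by rw [(mem_powersetCard.1 hS).2], ← sum_mul, hw k hk,
    zero_mul]

theorem indicator_ite_compl_eq {E : Type*} (p : Prop) [Decidable p] (A : Set E) (α : ℂ) (t : E) :
    (if p then A else Aᶜ).indicator 1 t =
      (if p then 1 else -1) * (A.indicator 1 t - α) + if p then α else 1 - α := by
  by_cases ht : t ∈ A <;> split_ifs <;> simp [ht]

theorem norm_indicator_one_sub_le_one {E : Type*} (A : Set E) {α : ℝ} (h0 : 0 ≤ α) (h1 : α ≤ 1)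
    (t : E) : ‖(A.indicator 1 t - α : ℂ)‖ ≤ 1 := by
  by_cases ht : t ∈ A
  · rw [Set.indicator_of_mem ht, Pi.one_apply, ← Complex.ofReal_one, ← Complex.ofReal_sub,
      Complex.norm_real, Real.norm_of_nonneg] <;> linarith
  · rw [Set.indicator_of_notMem ht, zero_sub, norm_neg, Complex.norm_real,
      Real.norm_of_nonneg] <;> linarith

theorem integral_indicator_one_sub_eq_zero {E : Type*} [MeasurableSpace E] (ν : Measure E)
    [IsProbabilityMeasure ν] {A : Set E} (hA : MeasurableSet A) :
    ∫ t, (A.indicator 1 t - ν.real A : ℂ) ∂ν = 0 := by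
  rw [Pi.one_def, integral_sub ((integrable_const (1 : ℂ)).indicator hA) (integrable_const _),
    integral_indicator_const _ hA]
  simp

theorem setIntegral_univ_pi_eq_integral_prod_indicator_mul {E ι : Type*} [MeasurableSpace E]
    [Fintype ι] {μ : Measure (ι → E)} {B : ι → Set E} (hB : ∀ i, MeasurableSet (B i))
    (F : (ι → E) → ℂ) :
    ∫ x in Set.univ.pi B, F x ∂μ = ∫ x, (∏ i, (B i).indicator 1 (x i)) * F x ∂μ := by
  rw [← integral_indicator (.univ_pi hB)]
  congr 1
  funext x
  by_cases hx : x ∈ Set.univ.pi B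
  · simp [hx, Set.indicator_of_mem (hx _ (Set.mem_univ _))]
  · obtain ⟨i, hi⟩ : ∃ i, x i ∉ B i := by simpa [Set.mem_univ_pi] using hx
    have hzero : ∏ j, (B j).indicator (1 : E → ℂ) (x j) = 0 :=
      prod_eq_zero (mem_univ i) (Set.indicator_of_notMem hi _)
    simp [hx, hzero]

section ProductIntegrals

variable {E : Type*} [MeasurableSpace E] (ν : Measure E) [IsProbabilityMeasure ν]

theorem measurePreserving_comp_of_injective {κ ι : Type*} [Fintype κ] [Fintype ι] {e : κ → ι}
    (he : Injective e) :
    MeasurePreserving (fun x : ι → E => x ∘ e) (Measure.pi fun _ => ν) (Measure.pi fun _ => ν) := by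
  have hmeas : Measurable (fun x : ι → E => x ∘ e) :=
    measurable_pi_lambda _ fun j => measurable_pi_apply (e j)
  refine ⟨hmeas, (Measure.pi_eq fun t ht => ?_).symm⟩
  have hpre : (fun x : ι → E => x ∘ e) ⁻¹' Set.univ.pi t =
      Set.univ.pi (extend e t fun _ => Set.univ) := by
    ext x
    simp only [Set.mem_preimage, Set.mem_univ_pi, comp_apply]
    refine ⟨fun h i => ?_, fun h j => by simpa [he.extend_apply] using h (e j)⟩
    by_cases hi : ∃ j, e j = i
    · obtain ⟨j, rfl⟩ := hi
      simpa [he.extend_apply] using h j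
    · simp [extend_apply' _ _ _ hi]
  rw [Measure.map_apply hmeas (.univ_pi ht), hpre, Measure.pi_pi]
  simp_rw [apply_extend ν, comp_def, measure_univ, ← Pi.one_def]
  rw [← tprod_fintype (L := .unconditional ι), tprod_extend_one he, tprod_fintype]

theorem integrable_comp_of_injective {κ ι : Type*} [Fintype κ] [Fintype ι] {e : κ → ι}
    (he : Injective e) {G : (κ → E) → ℂ} (hG : Integrable G (Measure.pi fun _ => ν)) :
    Integrable (fun x : ι → E => G (x ∘ e)) (Measure.pi fun _ => ν) :=
  ((measurePreserving_comp_of_injective ν he).integrable_comp hG.aestronglyMeasurable).2 hG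

theorem integral_eq_zero_of_integral_update_eq_zero {G : Type*} [NormedAddCommGroup G]
    [NormedSpace ℝ G] {n : ℕ} {F : (Fin n → E) → G} (hF : Integrable F (Measure.pi fun _ => ν))
    (i : Fin n) (h0 : ∀ x, ∫ t, F (update x i t) ∂ν = 0) :
    ∫ x, F x ∂(Measure.pi fun _ => ν) = 0 := by
  cases n with
  | zero => exact i.elim0
  | succ n =>
    set e := MeasurableEquiv.piFinSuccAbove (fun _ => E) i
    have hmp := (measurePreserving_piFinSuccAbove (fun _ => ν) i).symm e
    have hint : Integrable (fun y => F (e.symm y)) (ν.prod (Measure.pi fun _ => ν)) :=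
      (hmp.integrable_comp_emb e.symm.measurableEmbedding).2 hF
    obtain ⟨s⟩ := nonempty_of_isProbabilityMeasure ν
    have hslice : ∀ z, ∫ t, F (e.symm (t, z)) ∂ν = 0 := fun z => by
      simpa [e, MeasurableEquiv.piFinSuccAbove_symm_apply, Fin.insertNthEquiv,
        Fin.update_insertNth] using h0 (i.insertNth s z)
    rw [← hmp.integral_comp' F, integral_prod_symm _ hint]
    simp [hslice]

variable {n k : ℕ} {e : Fin k → Fin n} {H : E → ℂ} {G : (Fin k → E) → ℂ}

theorem integrable_prod_mul {ι : Type*} [Fintype ι] {μ : Measure (ι → E)} {F : (ι → E) → ℂ}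
    (hHm : Measurable H) (hH1 : ∀ t, ‖H t‖ ≤ 1) (hF : Integrable F μ) (T : Finset ι) :
    Integrable (fun x => (∏ i ∈ T, H (x i)) * F x) μ := by
  refine hF.bdd_mul (c := 1) (Finset.measurable_prod T fun i _ =>
    hHm.comp (measurable_pi_apply i)).aestronglyMeasurable (ae_of_all _ fun x => ?_)
  rw [norm_prod]
  exact prod_le_one (fun i _ => norm_nonneg _) fun i _ => hH1 _

theorem integral_prod_mul_comp_eq_zero (he : Injective e) (hHm : Measurable H)
    (hH1 : ∀ t, ‖H t‖ ≤ 1) (hH0 : ∫ t, H t ∂ν = 0) (hG : Integrable G (Measure.pi fun _ => ν))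
    (hGmarg : ∀ j x, ∫ t, G (update x j t) ∂ν = 0) {T : Finset (Fin n)}
    (hT : T ≠ univ.image e) :
    ∫ x, (∏ i ∈ T, H (x i)) * G (x ∘ e) ∂(Measure.pi fun _ => ν) = 0 := by
  have hint := integrable_prod_mul hHm hH1 (integrable_comp_of_injective ν he hG) T
  by_cases hTe : T ⊆ univ.image e
  · obtain ⟨i₀, hi₀, hi₀T⟩ := not_subset.1 fun h => hT (subset_antisymm hTe h)
    obtain ⟨j₀, -, rfl⟩ := mem_image.1 hi₀
    refine integral_eq_zero_of_integral_update_eq_zero ν hint (e j₀) fun x => ?_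
    have hprod : ∀ t, ∏ i ∈ T, H (update x (e j₀) t i) = ∏ i ∈ T, H (x i) := fun t =>
      prod_congr rfl fun i hi => by rw [update_of_ne (ne_of_mem_of_not_mem hi hi₀T)]
    simp_rw [hprod, update_comp_eq_of_injective _ he, integral_const_mul, hGmarg, mul_zero]
  · obtain ⟨i₀, hi₀T, hi₀⟩ := not_subset.1 hTe
    refine integral_eq_zero_of_integral_update_eq_zero ν hint i₀ fun x => ?_
    have hprod : ∀ t, ∏ i ∈ T, H (update x i₀ t i) = H t * ∏ i ∈ T.erase i₀, H (x i) := fun t => by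
      rw [← mul_prod_erase T _ hi₀T, update_self]
      exact congrArg _ (prod_congr rfl fun i hi => by rw [update_of_ne (ne_of_mem_erase hi)])
    have hcomp : ∀ t, update x i₀ t ∘ e = x ∘ e := fun t =>
      update_comp_eq_of_forall_ne _ _ fun j h => hi₀ (h ▸ mem_image_of_mem e (mem_univ j))
    simp_rw [hprod, hcomp, mul_assoc, integral_mul_const, hH0, zero_mul]

theorem integral_prod_image_mul_comp (he : Injective e) (hHm : Measurable H)
    (hH1 : ∀ t, ‖H t‖ ≤ 1) (hG : Integrable G (Measure.pi fun _ => ν)) :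
    ∫ x, (∏ i ∈ univ.image e, H (x i)) * G (x ∘ e) ∂(Measure.pi fun _ => ν) =
      ∫ y, (∏ j, H (y j)) * G y ∂(Measure.pi fun _ => ν) := by
  have hmp := measurePreserving_comp_of_injective ν he
  rw [← hmp.map_eq, integral_map hmp.measurable.aemeasurable]
  · simp_rw [prod_image he.injOn]; rfl
  · rw [hmp.map_eq]; exact (integrable_prod_mul hHm hH1 hG univ).aestronglyMeasurable

theorem integral_prod_add_mul_comp (he : Injective e) (hHm : Measurable H)
    (hH1 : ∀ t, ‖H t‖ ≤ 1) (hH0 : ∫ t, H t ∂ν = 0) (hG : Integrable G (Measure.pi fun _ => ν))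
    (hGmarg : ∀ j x, ∫ t, G (update x j t) ∂ν = 0) (a b : Fin n → ℂ) :
    ∫ x, (∏ i, (a i * H (x i) + b i)) * G (x ∘ e) ∂(Measure.pi fun _ => ν) =
      ((∏ i ∈ univ.image e, a i) * ∏ i ∈ univ \ univ.image e, b i) *
        ∫ y, (∏ j, H (y j)) * G y ∂(Measure.pi fun _ => ν) := by
  have hexpand : ∀ x : Fin n → E, (∏ i, (a i * H (x i) + b i)) * G (x ∘ e) =
      ∑ T ∈ univ.powerset, ((∏ i ∈ T, a i) * ∏ i ∈ univ \ T, b i) *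
        ((∏ i ∈ T, H (x i)) * G (x ∘ e)) := fun x => by
    rw [prod_add, sum_mul]
    refine sum_congr rfl fun T _ => ?_
    rw [prod_mul_distrib]
    ring
  have hint := integrable_prod_mul hHm hH1 (integrable_comp_of_injective ν he hG)
  simp_rw [hexpand]
  rw [integral_finsetSum _ fun T _ => (hint T).const_mul _]
  simp_rw [integral_const_mul]
  rw [sum_eq_single_of_mem _ (mem_powerset.2 (subset_univ _)) fun T _ hT => by
    rw [integral_prod_mul_comp_eq_zero ν he hHm hH1 hH0 hG hGmarg hT, mul_zero],
    integral_prod_image_mul_comp ν he hHm hH1 hG]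

theorem setIntegral_univ_pi_ite_compl_comp (he : Injective e) (p : Fin n → Prop)
    [DecidablePred p] {A : Set E} (hA : MeasurableSet A) {α : ℂ}
    (hH1 : ∀ t, ‖A.indicator 1 t - α‖ ≤ 1) (hH0 : ∫ t, A.indicator 1 t - α ∂ν = 0)
    (hG : Integrable G (Measure.pi fun _ => ν)) (hGmarg : ∀ j x, ∫ t, G (update x j t) ∂ν = 0) :
    ∫ x in Set.univ.pi (fun i => if p i then A else Aᶜ), G (x ∘ e) ∂(Measure.pi fun _ => ν) =
      layerWeight p α (univ.image e) *
        ∫ y, (∏ j, (A.indicator 1 (y j) - α)) * G y ∂(Measure.pi fun _ => ν) := by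
  rw [setIntegral_univ_pi_eq_integral_prod_indicator_mul fun i => by
    split_ifs
    exacts [hA, hA.compl]]
  simp_rw [indicator_ite_compl_eq _ A α]
  exact integral_prod_add_mul_comp ν he ((measurable_const.indicator hA).sub measurable_const)
    hH1 hH0 hG hGmarg _ _

end ProductIntegrals

instance isProbabilityMeasure_volume_restrict_Icc :
    IsProbabilityMeasure (volume.restrict (Set.Icc (0 : ℝ) 1)) :=
  ⟨by simp⟩

theorem volume_restrict_unitCube (k : ℕ) :
    volume.restrict (unitCube k) = Measure.pi fun _ => volume.restrict (Set.Icc (0 : ℝ) 1) := by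
  rw [unitCube, volume_pi, Measure.restrict_pi_pi]

theorem volume_restrict_univ_pi_ite {ι : Type*} [Fintype ι] (p : ι → Prop) [DecidablePred p]
    {A : Set ℝ} (hA : MeasurableSet A) (hA01 : A ⊆ Set.Icc 0 1) :
    volume.restrict (Set.univ.pi fun i => if p i then A else Set.Icc 0 1 \ A) =
      (Measure.pi fun _ => volume.restrict (Set.Icc (0 : ℝ) 1)).restrict
        (Set.univ.pi fun i => if p i then A else Aᶜ) := by
  rw [volume_pi, Measure.restrict_pi_pi, Measure.restrict_pi_pi]
  congr 1
  funext i
  split_ifs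
  · rw [Measure.restrict_restrict hA, Set.inter_eq_left.2 hA01]
  · rw [Measure.restrict_restrict hA.compl, Set.sdiff_eq, Set.inter_comm]

theorem symmetric_if_general {m r : ℕ} (hr : r ≤ m)
    (α : ℝ) (hα : α ∈ Set.Ioo (0:ℝ) 1)
    (g : (k : ℕ) → (Fin k → ℝ) → ℂ)
    (hgint : ∀ k, IntegrableOn (g k) (unitCube k))
    (hgmarg : ∀ k, ∀ i : Fin k, ∀ x : Fin k → ℝ,
        ∫ t in (0:ℝ)..1, g k (Function.update x i t) = 0)
    (f : (Fin m → ℝ) → ℂ)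
    (hf : ∀ x : Fin m → ℝ,
        f x = ∑ S ∈ Finset.univ.filter (fun S : Finset (Fin m) => S.card ∈ Kset m r α),
          g S.card (fun j => x ((S.orderIsoOfFin rfl j : Fin m)))) :
    ∀ A : Set ℝ, MeasurableSet A → A ⊆ Set.Icc (0:ℝ) 1 → volume A = ENNReal.ofReal α →
      ∫ x in Set.univ.pi (fun i : Fin m =>
          if (i : ℕ) < m - r then A else Set.Icc (0:ℝ) 1 \ A), f x = 0 := by
  intro A hA hA01 hAvol
  simp_rw [volume_restrict_univ_pi_ite _ hA hA01, hf, coe_orderIsoOfFin_apply]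
  set ν : Measure ℝ := volume.restrict (Set.Icc 0 1)
  have hgν : ∀ k, Integrable (g k) (Measure.pi fun _ => ν) := fun k => by
    simpa [IntegrableOn, volume_restrict_unitCube] using hgint k
  have hgνmarg : ∀ k j x, ∫ t, g k (update x j t) ∂ν = 0 := fun k j x => by
    rw [integral_Icc_eq_integral_Ioc, ← intervalIntegral.integral_of_le zero_le_one, hgmarg]
  have hνA : ν.real A = α := by
    simp [ν, measureReal_def, Measure.restrict_apply hA, Set.inter_eq_left.2 hA01, hAvol, hα.1.le]
  have hH0 := integral_indicator_one_sub_eq_zero ν hA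
  rw [hνA] at hH0
  -- a function of the level alone, so that the terms can be regrouped by `#S`
  set I : ℕ → ℂ := fun k =>
    ∫ y, (∏ j, (A.indicator 1 (y j) - α : ℂ)) * g k y ∂(Measure.pi fun _ => ν)
  have hterm : ∀ S : Finset (Fin m),
      ∫ x in Set.univ.pi fun i : Fin m => if (i : ℕ) < m - r then A else Aᶜ,
          g #S (fun j => x (S.orderEmbOfFin rfl j)) ∂(Measure.pi fun _ => ν) =
        layerWeight (fun i : Fin m => (i : ℕ) < m - r) α S * I #S := fun S => by
    have := setIntegral_univ_pi_ite_compl_comp ν (S.orderEmbOfFin rfl).injective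
      (fun i : Fin m => (i : ℕ) < m - r) hA
      (norm_indicator_one_sub_le_one A hα.1.le hα.2.le) hH0 (hgν _) (hgνmarg _)
    rwa [image_orderEmbOfFin_univ] at this
  rw [integral_finsetSum _ fun S _ => ?_, sum_congr rfl fun S _ => hterm S]
  · exact sum_filter_card_mem_mul_eq_zero _ _ I fun k hk =>
      sum_powersetCard_layerWeight_eq_zero hr hα hk
  · exact (integrable_comp_of_injective ν (S.orderEmbOfFin rfl).injective (hgν _)).restrict

/-- the "if" direction for symmetric functions. If `f` is built from symmetric
mean-zero kernels `g_k` on the levels `k ∈ K(m,r,α)`, then `∫_{A^{m−r} × (A^c)^r} f = 0`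
for every `A ⊆ [0,1]` of measure `α`. -/
theorem symmetric_if {m r : ℕ} (hm : 1 ≤ m) (hr : r ≤ m)
    (α : ℝ) (hα : α ∈ Set.Ioo (0:ℝ) 1)
    (g : (k : ℕ) → (Fin k → ℝ) → ℂ)
    (hgsym : ∀ k, ∀ σ : Equiv.Perm (Fin k), ∀ x : Fin k → ℝ, g k (x ∘ σ) = g k x)
    (hgint : ∀ k, IntegrableOn (g k) (unitCube k))
    (hgmarg : ∀ k, ∀ i : Fin k, ∀ x : Fin k → ℝ,
        ∫ t in (0:ℝ)..1, g k (Function.update x i t) = 0)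
    (f : (Fin m → ℝ) → ℂ)
    (hf : ∀ x : Fin m → ℝ,
        f x = ∑ S ∈ Finset.univ.filter (fun S : Finset (Fin m) => S.card ∈ Kset m r α),
          g S.card (fun j => x ((S.orderIsoOfFin rfl j : Fin m)))) :
    ∀ A : Set ℝ, MeasurableSet A → A ⊆ Set.Icc (0:ℝ) 1 → volume A = ENNReal.ofReal α →
      ∫ x in Set.univ.pi (fun i : Fin m =>
          if (i : ℕ) < m - r then A else Set.Icc (0:ℝ) 1 \ A), f x = 0 :=
  symmetric_if_general hr α hα g hgint hgmarg f hf
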